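/- If the argument of latitude ω is uniformly distributed on [0, 2π] and the polar angle of a satellite on an orbit of inclination b is Φ = arccos(sin b · sin ω), then Φ has probability density f_Φ(φ) = sin φ / (π·√(sin²φ − cos²b)) on (π/2 − b, π/2 + b). -/

import Mathlib

/-!
Since `arccos y ≤ x ↔ cos x ≤ y` for `x ∈ [0, π)`, the event `Φ ≤ x` is `sin ω ≥ t` with
`t = cos x / sin b`. By periodicity the uniform law on `[0, 2π]` may be replaced by the one on
`[-π/2, 3π/2]`, where this superlevel set of `sin` is the interval `[arcsin t, π - arcsin t]`.
Hence `P(Φ ≤ x) = 1/2 - arcsin (cos x / sin b) / π` on the band `[π/2 - b, π/2 + b]`, which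
carries all the mass of `Φ`, and this function is an antiderivative of the stated density. The
density blows up at both ends of the band, but it is integrable there, being the nonnegative
derivative of a function continuous up to the endpoints.
-/

open Real MeasureTheory Set

theorem MeasureTheory.Measure.ext_of_Iic_of_measure_compl_Icc {α : Type*} [TopologicalSpace α]
    {m : MeasurableSpace α} [SecondCountableTopology α] [LinearOrder α] [OrderTopology α]
    [BorelSpace α] {μ ν : Measure α} [IsFiniteMeasure μ] {a c : α} (hac : a ≤ c)
    (hμ : μ (Icc a c)ᶜ = 0) (hν : ν (Icc a c)ᶜ = 0)
    (h : ∀ x ∈ Icc a c, μ (Iic x) = ν (Iic x)) : μ = ν := by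
  refine Measure.ext_of_Iic μ ν fun x => ?_
  rcases lt_or_ge x a with hxa | hax
  · have hsub : Iic x ⊆ (Icc a c)ᶜ := fun y hyx hy => (hyx.trans_lt hxa).not_ge hy.1
    rw [measure_mono_null hsub hμ, measure_mono_null hsub hν]
  rcases le_or_gt x c with hxc | hcx
  · exact h x ⟨hax, hxc⟩
  · have hcut : ∀ m : Measure α, m (Icc a c)ᶜ = 0 → m (Iic x) = m (Iic c) := fun m hm => by
      rw [← measure_inter_conull hm, ← measure_inter_conull (s := Iic c) hm,
        inter_eq_right.2 (Icc_subset_Iic_self.trans (Iic_subset_Iic.2 hcx.le)),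
        inter_eq_right.2 Icc_subset_Iic_self]
    rw [hcut μ hμ, hcut ν hν, h c ⟨hac, le_rfl⟩]

theorem withDensity_ofReal_deriv_apply_Iic {g g' : ℝ → ℝ} {a c x : ℝ}
    (hg : ContinuousOn g (Icc a c)) (hderiv : ∀ y ∈ Ioo a c, HasDerivAt g (g' y) y)
    (hpos : ∀ y ∈ Ioo a c, 0 ≤ g' y) (hx : x ∈ Icc a c) :
    (volume.restrict (Icc a c)).withDensity (fun y => ENNReal.ofReal (g' y)) (Iic x)
      = ENNReal.ofReal (g x - g a) := by
  have hIoo : Ioo a x ⊆ Ioo a c := Ioo_subset_Ioo_right hx.2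
  have hcont : ContinuousOn g (Icc a x) := hg.mono (Icc_subset_Icc_right hx.2)
  have hderiv' : ∀ y ∈ Ioo a x, HasDerivAt g (g' y) y := fun y hy => hderiv y (hIoo hy)
  have hint : IntegrableOn g' (Ioc a x) :=
    intervalIntegral.integrableOn_deriv_of_nonneg hcont hderiv' fun y hy => hpos y (hIoo hy)
  have hset : Iic x ∩ Icc a c = Icc a x :=
    ext fun y => ⟨fun h => ⟨h.2.1, h.1⟩, fun h => ⟨h.2, h.1, h.2.trans hx.2⟩⟩
  have hnonneg : 0 ≤ᵐ[volume.restrict (Ioo a x)] g' :=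
    ae_restrict_of_forall_mem measurableSet_Ioo fun y hy => hpos y (hIoo hy)
  calc (volume.restrict (Icc a c)).withDensity (fun y => ENNReal.ofReal (g' y)) (Iic x)
      = ∫⁻ y in Ioo a x, ENNReal.ofReal (g' y) := by
        rw [withDensity_apply _ measurableSet_Iic, Measure.restrict_restrict measurableSet_Iic,
          hset]
        exact setLIntegral_congr Ioo_ae_eq_Icc.symm
    _ = ENNReal.ofReal (∫ y in Ioo a x, g' y) :=
        (ofReal_integral_eq_lintegral_ofReal (hint.mono_set Ioo_subset_Ioc_self) hnonneg).symm
    _ = ENNReal.ofReal (g x - g a) := by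
        rw [← integral_Ioc_eq_integral_Ioo, ← intervalIntegral.integral_of_le hx.1,
          intervalIntegral.integral_eq_sub_of_hasDerivAt_of_le hx.1 hcont hderiv'
            ((intervalIntegrable_iff_integrableOn_Ioc_of_le hx.1).2 hint)]

theorem Function.Periodic.volume_inter_Icc_eq {A : Set ℝ} {T : ℝ}
    (hA : Function.Periodic (· ∈ A) T) (hT : 0 < T) (hAm : MeasurableSet A) (s t : ℝ) :
    volume (A ∩ Icc s (s + T)) = volume (A ∩ Icc t (t + T)) := by
  have hIoc : ∀ u, volume (A ∩ Icc u (u + T)) = volume (A ∩ Ioc u (u + T)) := fun u =>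
    measure_congr ((ae_eq_refl A).inter Ioc_ae_eq_Icc).symm
  rw [hIoc, hIoc]
  refine (isAddFundamentalDomain_Ioc hT s).measure_set_eq (isAddFundamentalDomain_Ioc hT t) hAm
    fun ⟨g, hg⟩ => ?_
  obtain ⟨n, rfl⟩ := AddSubgroup.mem_zmultiples_iff.1 hg
  ext x
  show n • T + x ∈ A ↔ x ∈ A
  rw [add_comm]
  exact Iff.of_eq (hA.zsmul n x)

theorem Real.arccos_le_iff_cos_le {x y : ℝ} (hx : x ∈ Ico 0 π) : arccos y ≤ x ↔ cos x ≤ y := by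
  rw [arccos_eq_pi_div_two_sub_arcsin, sub_le_comm,
    le_arcsin_iff_sin_le' ⟨by linarith [hx.2], by linarith [hx.1]⟩, sin_pi_div_two_sub]

theorem Real.setOf_le_sin_inter_Icc {t : ℝ} (ht : t ∈ Icc (-1) 1) :
    {ω | t ≤ sin ω} ∩ Icc (-(π / 2)) (-(π / 2) + 2 * π) = Icc (arcsin t) (π - arcsin t) := by
  have := neg_pi_div_two_le_arcsin t
  have := arcsin_le_pi_div_two t
  ext ω
  simp only [mem_inter_iff, mem_ofPred_eq, mem_Icc]
  constructor
  · rintro ⟨hts, hlo, hhi⟩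
    rcases le_total ω (π / 2) with hω | hω
    · have := (arcsin_le_iff_le_sin ht ⟨hlo, hω⟩).2 hts
      constructor <;> linarith
    · have := (arcsin_le_iff_le_sin ht ⟨by linarith, by linarith⟩).2 (sin_pi_sub ω ▸ hts)
      constructor <;> linarith
  · rintro ⟨h1, h2⟩
    refine ⟨?_, by linarith, by linarith⟩
    rcases le_total ω (π / 2) with hω | hω
    · exact (arcsin_le_iff_le_sin ht ⟨by linarith, hω⟩).1 h1
    · rw [← sin_pi_sub]
      exact (arcsin_le_iff_le_sin ht ⟨by linarith, by linarith⟩).1 (by linarith)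

theorem Real.volume_setOf_le_sin_inter_Icc {t : ℝ} (ht : t ∈ Icc (-1) 1) :
    volume ({ω | t ≤ sin ω} ∩ Icc 0 (2 * π)) = ENNReal.ofReal (π - 2 * arcsin t) := by
  have hper : Function.Periodic (· ∈ {ω | t ≤ sin ω}) (2 * π) := sin_periodic.comp (t ≤ ·)
  rw [← zero_add (2 * π), hper.volume_inter_Icc_eq two_pi_pos
    (measurableSet_le measurable_const continuous_sin.measurable) 0 (-(π / 2)),
    setOf_le_sin_inter_Icc ht, volume_Icc]
  congr 1
  ring

theorem Real.abs_cos_le_sin_of_mem_Icc {b x : ℝ} (hb : b ∈ Icc 0 (π / 2))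
    (hx : x ∈ Icc (π / 2 - b) (π / 2 + b)) :
    |cos x| ≤ sin b := by
  obtain ⟨hb0, hb2⟩ := hb
  obtain ⟨hx1, hx2⟩ := hx
  have := pi_pos
  refine abs_le.2 ⟨?_, ?_⟩
  · have := cos_le_cos_of_nonneg_of_le_pi (by linarith) (by linarith) hx2
    rwa [add_comm, cos_add_pi_div_two] at this
  · have := cos_le_cos_of_nonneg_of_le_pi (by linarith) (by linarith) hx1
    rwa [cos_pi_div_two_sub] at this

theorem Real.abs_cos_lt_sin_of_mem_Ioo {b x : ℝ} (hb : b ∈ Icc 0 (π / 2))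
    (hx : x ∈ Ioo (π / 2 - b) (π / 2 + b)) :
    |cos x| < sin b := by
  obtain ⟨hb0, hb2⟩ := hb
  obtain ⟨hx1, hx2⟩ := hx
  have := pi_pos
  refine abs_lt.2 ⟨?_, ?_⟩
  · have := cos_lt_cos_of_nonneg_of_le_pi (by linarith) (by linarith) hx2
    rwa [add_comm, cos_add_pi_div_two] at this
  · have := cos_lt_cos_of_nonneg_of_le_pi (by linarith) (by linarith) hx1
    rwa [cos_pi_div_two_sub] at this

theorem arccos_sin_mul_sin_mem_Icc {b : ℝ} (hb : b ∈ Icc 0 (π / 2)) (ω : ℝ) :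
    arccos (sin b * sin ω) ∈ Icc (π / 2 - b) (π / 2 + b) := by
  have hsb : 0 ≤ sin b := sin_nonneg_of_nonneg_of_le_pi hb.1 (by linarith [hb.2, pi_pos])
  have hle := arcsin_le_arcsin (mul_le_of_le_one_right hsb (sin_le_one ω))
  have hge := arcsin_le_arcsin (show -sin b ≤ sin b * sin ω by nlinarith [neg_one_le_sin ω])
  have hb' : arcsin (sin b) = b := arcsin_sin (by linarith [hb.1, pi_pos]) hb.2
  rw [hb'] at hle
  rw [arcsin_neg, hb'] at hge
  rw [arccos_eq_pi_div_two_sub_arcsin]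
  constructor <;> linarith

noncomputable def polarAngleCDF (b x : ℝ) : ℝ := 1 / 2 - arcsin (cos x / sin b) / π

theorem continuous_polarAngleCDF (b : ℝ) : Continuous (polarAngleCDF b) := by
  unfold polarAngleCDF; fun_prop

theorem polarAngleCDF_pi_div_two_sub {b : ℝ} (hb : sin b ≠ 0) :
    polarAngleCDF b (π / 2 - b) = 0 := by
  rw [polarAngleCDF, cos_pi_div_two_sub, div_self hb, arcsin_one]
  field_simp
  ring

theorem hasDerivAt_polarAngleCDF {b x : ℝ} (hx : |cos x| < sin b) :
    HasDerivAt (polarAngleCDF b) (sin x / (π * √(sin x ^ 2 - cos b ^ 2))) x := by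
  have hsb : 0 < sin b := (abs_nonneg _).trans_lt hx
  set t := cos x / sin b with ht_def
  obtain ⟨ht1, ht2⟩ : -1 < t ∧ t < 1 :=
    abs_lt.1 (by rwa [abs_div, abs_of_pos hsb, div_lt_one hsb])
  have hd := (((hasDerivAt_arcsin ht1.ne' ht2.ne).comp x
    ((hasDerivAt_cos x).div_const (sin b))).div_const π).const_sub (1 / 2)
  refine hd.congr_deriv ?_
  have key : √(sin x ^ 2 - cos b ^ 2) = sin b * √(1 - t ^ 2) := by
    rw [← sqrt_sq hsb.le, ← sqrt_mul (sq_nonneg _)]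
    congr 1
    rw [ht_def]
    field_simp
    nlinarith [sin_sq_add_cos_sq x, sin_sq_add_cos_sq b]
  have : 0 < √(1 - t ^ 2) := sqrt_pos.2 (by nlinarith)
  rw [key]
  field_simp

theorem volume_preimage_arccos_sin_mul_sin_Iic_inter_Icc {b x : ℝ} (hb : b ∈ Ioo 0 (π / 2))
    (hx : x ∈ Icc (π / 2 - b) (π / 2 + b)) :
    volume ((fun ω => arccos (sin b * sin ω)) ⁻¹' Iic x ∩ Icc 0 (2 * π))
      = ENNReal.ofReal (2 * π * polarAngleCDF b x) := by
  have := pi_pos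
  have hsb : 0 < sin b := sin_pos_of_pos_of_lt_pi hb.1 (by linarith [hb.2])
  have hset : (fun ω => arccos (sin b * sin ω)) ⁻¹' Iic x = {ω | cos x / sin b ≤ sin ω} := by
    ext ω
    simp only [mem_preimage, mem_Iic, mem_ofPred_eq]
    rw [arccos_le_iff_cos_le ⟨by linarith [hx.1, hb.2], by linarith [hx.2, hb.2]⟩,
      div_le_iff₀' hsb]
  have ht : |cos x / sin b| ≤ 1 := by
    rw [abs_div, abs_of_pos hsb, div_le_one hsb]
    exact abs_cos_le_sin_of_mem_Icc ⟨hb.1.le, hb.2.le⟩ hx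
  rw [hset, volume_setOf_le_sin_inter_Icc (abs_le.1 ht), polarAngleCDF]
  congr 1
  field_simp

theorem polar_angle_density_from_uniform_argument_of_latitude
    (b : ℝ) (hb : b ∈ Set.Ioo 0 (π / 2)) :
    Measure.map (fun ω : ℝ => Real.arccos (Real.sin b * Real.sin ω))
        ((ENNReal.ofReal (2 * π))⁻¹ • volume.restrict (Set.Icc 0 (2 * π)))
      = volume.withDensity (fun φ => ENNReal.ofReal
          (Set.indicator (Set.Ioo (π / 2 - b) (π / 2 + b))
            (fun φ => Real.sin φ / (π * Real.sqrt (Real.sin φ ^ 2 - Real.cos b ^ 2))) φ)) := by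
  have hsb : 0 < sin b := sin_pos_of_pos_of_lt_pi hb.1 (by linarith [hb.2, pi_pos])
  have hb' : b ∈ Icc 0 (π / 2) := ⟨hb.1.le, hb.2.le⟩
  have hf : Measurable fun ω => arccos (sin b * sin ω) := by fun_prop
  have : IsFiniteMeasure ((ENNReal.ofReal (2 * π))⁻¹ • volume.restrict (Icc 0 (2 * π))) :=
    Measure.smul_finite _ (by simp [pi_pos])
  have hdens : (fun φ => ENNReal.ofReal ((Ioo (π / 2 - b) (π / 2 + b)).indicator
      (fun φ => sin φ / (π * √(sin φ ^ 2 - cos b ^ 2))) φ))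
      = (Ioo (π / 2 - b) (π / 2 + b)).indicator
        (fun φ => ENNReal.ofReal (sin φ / (π * √(sin φ ^ 2 - cos b ^ 2)))) :=
    (indicator_comp_of_zero ENNReal.ofReal_zero).symm
  rw [hdens, withDensity_indicator measurableSet_Ioo, Measure.restrict_congr_set Ioo_ae_eq_Icc]
  refine Measure.ext_of_Iic_of_measure_compl_Icc (a := π / 2 - b) (c := π / 2 + b)
    (by linarith [hb.1]) ?_ ?_ fun x hx => ?_
  · have hrange : (fun ω => arccos (sin b * sin ω)) ⁻¹' Icc (π / 2 - b) (π / 2 + b) = univ :=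
      eq_univ_of_forall (arccos_sin_mul_sin_mem_Icc hb')
    rw [Measure.map_apply hf measurableSet_Icc.compl, preimage_compl, hrange, compl_univ,
      measure_empty]
  · exact withDensity_absolutelyContinuous _ _ (ae_restrict_mem measurableSet_Icc)
  · rw [withDensity_ofReal_deriv_apply_Iic (continuous_polarAngleCDF b).continuousOn
      (fun y hy => hasDerivAt_polarAngleCDF (abs_cos_lt_sin_of_mem_Ioo hb' hy))
      (fun y hy => div_nonneg (sin_nonneg_of_nonneg_of_le_pi (by linarith [hy.1, hb.2])
        (by linarith [hy.2, hb.2])) (by positivity)) hx,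
      polarAngleCDF_pi_div_two_sub hsb.ne', sub_zero, Measure.map_apply hf measurableSet_Iic,
      Measure.smul_apply, Measure.restrict_apply (hf measurableSet_Iic), smul_eq_mul,
      volume_preimage_arccos_sin_mul_sin_Iic_inter_Icc hb hx, ENNReal.ofReal_mul two_pi_pos.le,
      ← mul_assoc, ENNReal.inv_mul_cancel (by simp [pi_pos]) ENNReal.ofReal_ne_top, one_mul]
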